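/- arXiv:1602.00765 — 3 statements merged into one kernel-verified Lean document; each statement's English description precedes it below -/
import Mathlib

section
/- Let L_1(x) = I_{H_1} + Σ_{j=1}^g A_j x_j and L_2(x) = I_{H_2} + Σ_{j=1}^g B_j x_j be monic linear operator pencils with bounded self-adjoint coefficients on separable real Hilbert spaces H_1, H_2, and let 𝒦 be an infinite-dimensional separable real Hilbert space. Then the following are equivalent: (i) for every closed subspace K' of 𝒦 and every g-tuple X of bounded self-adjoint operators on K', L_1(X) ⪰ 0 implies L_2(X) ⪰ 0; (ii) for every n ∈ ℕ, D_{L_1}(n) ⊆ D_{L_2}(n). -/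
open scoped RealInnerProductSpace

noncomputable section

variable {E H K : Type*}

/-- A bounded operator on a real inner product space is symmetric (self-adjoint). -/
def OpIsSymm [NormedAddCommGroup E] [InnerProductSpace ℝ E] (T : E →L[ℝ] E) : Prop :=
  ∀ u v : E, ⟪T u, v⟫ = ⟪u, T v⟫

/-- A bounded operator on a real inner product space is positive semidefinite. -/
def OpIsPos [NormedAddCommGroup E] [InnerProductSpace ℝ E] (T : E →L[ℝ] E) : Prop :=
  OpIsSymm T ∧ ∀ v : E, 0 ≤ ⟪T v, v⟫

/-- A bounded operator is positive definite: `T - ε • id` is positive semidefinite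
for some `ε > 0`. -/
def OpIsPosDef [NormedAddCommGroup E] [InnerProductSpace ℝ E] (T : E →L[ℝ] E) : Prop :=
  ∃ ε : ℝ, 0 < ε ∧ OpIsPos (T - ε • ContinuousLinearMap.id ℝ E)

/-- The block operator on the Hilbert direct sum `H^n` whose `(i,k)` block is `c i k`. -/
def blockOp [NormedAddCommGroup H] [InnerProductSpace ℝ H] {n : ℕ}
    (c : Fin n → Fin n → (H →L[ℝ] H)) :
    (PiLp 2 fun _ : Fin n => H) →L[ℝ] (PiLp 2 fun _ : Fin n => H) :=
  (((PiLp.continuousLinearEquiv 2 ℝ (fun _ : Fin n => H)).symm.toContinuousLinearMap.comp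
    (ContinuousLinearMap.pi fun i : Fin n =>
      ∑ k : Fin n, (c i k).comp (ContinuousLinearMap.proj k))).comp
    (PiLp.continuousLinearEquiv 2 ℝ (fun _ : Fin n => H)).toContinuousLinearMap)

/-- Evaluation of the homogeneous linear pencil `I_H x₀ + Σ_j A_j x_j` at a tuple of
`n × n` matrices: the operator on `H^n` with `(i,k)` block
`(X₀)_{ik} I_H + Σ_j (X_j)_{ik} A_j`. -/
def hEval [NormedAddCommGroup H] [InnerProductSpace ℝ H] {g n : ℕ}
    (A : Fin g → (H →L[ℝ] H)) (X0 : Matrix (Fin n) (Fin n) ℝ)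
    (X : Fin g → Matrix (Fin n) (Fin n) ℝ) :
    (PiLp 2 fun _ : Fin n => H) →L[ℝ] (PiLp 2 fun _ : Fin n => H) :=
  blockOp fun i k => X0 i k • (1 : H →L[ℝ] H) + ∑ j, X j i k • A j

/-- Evaluation of the monic linear pencil `I_H + Σ_j A_j x_j` at a tuple of
`n × n` matrices. -/
def monicEval [NormedAddCommGroup H] [InnerProductSpace ℝ H] {g n : ℕ}
    (A : Fin g → (H →L[ℝ] H)) (X : Fin g → Matrix (Fin n) (Fin n) ℝ) :
    (PiLp 2 fun _ : Fin n => H) →L[ℝ] (PiLp 2 fun _ : Fin n => H) :=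
  hEval A 1 X

/-- Positivity of the evaluation `L(X) = A₀ ⊗ I_K + Σ_j A_j ⊗ X_j` of a linear operator
pencil at a tuple of bounded operators on a Hilbert space `K`. -/
def operPencilPos [NormedAddCommGroup H] [InnerProductSpace ℝ H]
    [NormedAddCommGroup K] [InnerProductSpace ℝ K] {g : ℕ}
    (A0 : H →L[ℝ] H) (A : Fin g → (H →L[ℝ] H)) (X : Fin g → (K →L[ℝ] K)) : Prop :=
  ∀ (m : ℕ) (h : Fin m → H) (u : Fin m → K),
    0 ≤ ∑ i, ∑ l,
      (⟪A0 (h i), h l⟫ * ⟪u i, u l⟫ + ∑ j, ⟪A j (h i), h l⟫ * ⟪X j (u i), u l⟫)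

/-- A bundled separable real Hilbert space. -/
structure SepHilbert where
  carrier : Type
  [nacg : NormedAddCommGroup carrier]
  [ips : InnerProductSpace ℝ carrier]
  [cs : CompleteSpace carrier]
  [sep : TopologicalSpace.SeparableSpace carrier]

attribute [instance] SepHilbert.nacg SepHilbert.ips SepHilbert.cs SepHilbert.sep

/-!
For vectors `u i = ∑ a, c i a • e a` in the span of an orthonormal family `e`, the form
`∑ i l, ⟪h i, h l⟫ ⟪u i, u l⟫ + ∑ j, ⟪A j (h i), h l⟫ ⟪X j (u i), u l⟫` that defines `L(X) ⪰ 0`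
equals `⟪L(Y) v, v⟫`, where `Y j` is the compression `(⟪X j (e b), e a⟫)_{a b}` and
`v a = ∑ i, c i a • h i`. So positivity of `L` at an operator tuple is positivity of `L` at all its
finite compressions. Conversely every symmetric matrix tuple of size `n` is the compression of an
operator tuple on an `n`-dimensional, hence closed, subspace, which exists since `𝒦` is
infinite-dimensional.
-/

section BlockOperators

variable [NormedAddCommGroup H] [InnerProductSpace ℝ H]

theorem blockOp_apply {n : ℕ} (c : Fin n → Fin n → (H →L[ℝ] H))
    (v : PiLp 2 fun _ : Fin n => H) (i : Fin n) :
    blockOp c v i = ∑ k, c i k (v k) := by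
  simp [blockOp]

theorem inner_hEval {g n : ℕ} (A : Fin g → (H →L[ℝ] H)) (Y0 : Matrix (Fin n) (Fin n) ℝ)
    (Y : Fin g → Matrix (Fin n) (Fin n) ℝ) (v w : PiLp 2 fun _ : Fin n => H) :
    ⟪hEval A Y0 Y v, w⟫ = ∑ a, ∑ b, (Y0 a b * ⟪v b, w a⟫ + ∑ j, Y j a b * ⟪A j (v b), w a⟫) := by
  simp [hEval, PiLp.inner_apply, blockOp_apply, sum_inner, inner_add_left, real_inner_smul_left]

theorem hEval_isSymm {g n : ℕ} {A : Fin g → (H →L[ℝ] H)} (hA : ∀ j, OpIsSymm (A j))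
    {Y0 : Matrix (Fin n) (Fin n) ℝ} (hY0 : Y0.IsSymm)
    {Y : Fin g → Matrix (Fin n) (Fin n) ℝ} (hY : ∀ j, (Y j).IsSymm) :
    OpIsSymm (hEval A Y0 Y) := by
  intro v w
  rw [← real_inner_comm v, inner_hEval, inner_hEval, Finset.sum_comm]
  refine Finset.sum_congr rfl fun a _ => Finset.sum_congr rfl fun b _ => ?_
  simp only [hY0.apply, (hY _).apply, hA _ (w b), real_inner_comm (w b)]

end BlockOperators

section Compression

variable [NormedAddCommGroup K] [InnerProductSpace ℝ K]

def compress {n : ℕ} (T : K →L[ℝ] K) (e : Fin n → K) : Matrix (Fin n) (Fin n) ℝ :=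
  Matrix.of fun a b => ⟪T (e b), e a⟫

theorem compress_isSymm {n : ℕ} {T : K →L[ℝ] K} (hT : OpIsSymm T) (e : Fin n → K) :
    (compress T e).IsSymm :=
  Matrix.IsSymm.ext fun a b => (hT (e a) (e b)).trans (real_inner_comm _ _)

theorem compress_one {n : ℕ} {e : Fin n → K} (he : Orthonormal ℝ e) :
    compress 1 e = 1 := by
  ext a b
  simp [compress, orthonormal_iff_ite.mp he, Matrix.one_apply, eq_comm]

theorem exists_opIsSymm_compress_eq {n : ℕ} (b : OrthonormalBasis (Fin n) ℝ K)
    {M : Matrix (Fin n) (Fin n) ℝ} (hM : M.IsSymm) :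
    ∃ T : K →L[ℝ] K, OpIsSymm T ∧ compress T b = M := by
  have : FiniteDimensional ℝ K := .of_basis b.toBasis
  set f := (LinearMap.toMatrixOrthonormal b).symm M
  have hf : LinearMap.toMatrixOrthonormal b f = M := StarAlgEquiv.apply_symm_apply _ M
  refine ⟨LinearMap.toContinuousLinearMap f, ?_, ?_⟩
  · exact (LinearMap.isHermitian_toMatrix_iff b).mp (hf ▸ Matrix.isHermitian_iff_isSymm.mpr hM)
  · ext a c
    rw [← hf, LinearMap.toMatrixOrthonormal_apply_apply, real_inner_comm]
    rfl

theorem exists_isClosed_orthonormalBasis (hK : ¬ FiniteDimensional ℝ K) (n : ℕ) :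
    ∃ K' : Submodule ℝ K, IsClosed (K' : Set K) ∧ Nonempty (OrthonormalBasis (Fin n) ℝ K') := by
  have hn : (n : Cardinal) ≤ Module.rank ℝ K :=
    Cardinal.natCast_lt_aleph0.le.trans (not_lt.mp (mt Module.rank_lt_aleph0_iff.mp hK))
  obtain ⟨f, hf⟩ := exists_linearIndependent_of_le_rank hn
  set K' := Submodule.span ℝ (Set.range f)
  have : FiniteDimensional ℝ K' := .span_of_finite ℝ (Set.finite_range f)
  have hdim : Module.finrank ℝ K' = n := by simpa using finrank_span_eq_card hf
  exact ⟨K', K'.closed_of_finiteDimensional,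
    ⟨(stdOrthonormalBasis ℝ K').reindex (finCongr hdim)⟩⟩

theorem exists_orthonormal_forall_mem_span {m : ℕ} (u : Fin m → K) :
    ∃ (d : ℕ) (e : Fin d → K), Orthonormal ℝ e ∧ ∀ i, u i ∈ Submodule.span ℝ (Set.range e) := by
  set W := Submodule.span ℝ (Set.range u)
  have : FiniteDimensional ℝ W := .span_of_finite ℝ (Set.finite_range u)
  let b := stdOrthonormalBasis ℝ W
  refine ⟨_, W.subtypeₗᵢ ∘ b, b.orthonormal.comp_linearIsometry _, fun i => ?_⟩
  obtain ⟨x, hx⟩ : ∃ x : W, (x : K) = u i := ⟨⟨u i, Submodule.subset_span ⟨i, rfl⟩⟩, rfl⟩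
  rw [← hx, ← b.sum_repr x]
  push_cast
  exact Submodule.sum_mem _ fun a _ => Submodule.smul_mem _ _ (Submodule.subset_span ⟨a, rfl⟩)

end Compression

section PencilForm

variable [NormedAddCommGroup H] [InnerProductSpace ℝ H]
variable [NormedAddCommGroup K] [InnerProductSpace ℝ K]

def gramPairing {m : ℕ} (S : H →L[ℝ] H) (T : K →L[ℝ] K) (h : Fin m → H) (u : Fin m → K) : ℝ :=
  ∑ i, ∑ l, ⟪S (h i), h l⟫ * ⟪T (u i), u l⟫

def pencilForm {g m : ℕ} (A0 : H →L[ℝ] H) (A : Fin g → (H →L[ℝ] H))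
    (X : Fin g → (K →L[ℝ] K)) (h : Fin m → H) (u : Fin m → K) : ℝ :=
  ∑ i, ∑ l, (⟪A0 (h i), h l⟫ * ⟪u i, u l⟫ + ∑ j, ⟪A j (h i), h l⟫ * ⟪X j (u i), u l⟫)

theorem pencilForm_eq_gramPairing_add_sum {g m : ℕ} (A0 : H →L[ℝ] H) (A : Fin g → (H →L[ℝ] H))
    (X : Fin g → (K →L[ℝ] K)) (h : Fin m → H) (u : Fin m → K) :
    pencilForm A0 A X h u = gramPairing A0 1 h u + ∑ j, gramPairing (A j) (X j) h u := by
  simp only [pencilForm, gramPairing, Finset.sum_add_distrib]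
  congr 1
  exact (Finset.sum_congr rfl fun _ _ => Finset.sum_comm).trans Finset.sum_comm

theorem gramPairing_sum_smul {m n : ℕ} (S : H →L[ℝ] H) (T : K →L[ℝ] K)
    (h : Fin m → H) (e : Fin n → K) (c : Fin m → Fin n → ℝ) :
    gramPairing S T h (fun i => ∑ a, c i a • e a)
      = gramPairing S T (fun a => ∑ i, c i a • h i) e := by
  simp only [gramPairing, map_sum, map_smul, sum_inner, inner_sum, real_inner_smul_left,
    real_inner_smul_right, Finset.mul_sum, Finset.sum_mul, ← Fintype.sum_prod_type']
  exact Fintype.sum_equiv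
    { toFun := fun x => (x.2.2.2, x.2.2.1, x.2.1, x.1)
      invFun := fun x => (x.2.2.2, x.2.2.1, x.2.1, x.1)
      left_inv := fun _ => rfl
      right_inv := fun _ => rfl } _ _ fun _ => by dsimp only [Equiv.coe_fn_mk]; ring

theorem pencilForm_sum_smul {g m n : ℕ} (A0 : H →L[ℝ] H) (A : Fin g → (H →L[ℝ] H))
    (X : Fin g → (K →L[ℝ] K)) (h : Fin m → H) (e : Fin n → K) (c : Fin m → Fin n → ℝ) :
    pencilForm A0 A X h (fun i => ∑ a, c i a • e a)
      = pencilForm A0 A X (fun a => ∑ i, c i a • h i) e := by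
  simp only [pencilForm_eq_gramPairing_add_sum, gramPairing_sum_smul]

theorem pencilForm_eq_inner_hEval {g n : ℕ} (A : Fin g → (H →L[ℝ] H))
    (X : Fin g → (K →L[ℝ] K)) (e : Fin n → K) (v : PiLp 2 fun _ : Fin n => H) :
    pencilForm 1 A X (fun a => v a) e
      = ⟪hEval A (compress 1 e) (fun j => compress (X j) e) v, v⟫ := by
  rw [inner_hEval, pencilForm, Finset.sum_comm]
  simp [compress, mul_comm]

theorem inner_monicEval_compress_nonneg {g n : ℕ} {A : Fin g → (H →L[ℝ] H)}
    {X : Fin g → (K →L[ℝ] K)} (hX : operPencilPos 1 A X) {e : Fin n → K}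
    (he : Orthonormal ℝ e) (v : PiLp 2 fun _ : Fin n => H) :
    0 ≤ ⟪monicEval A (fun j => compress (X j) e) v, v⟫ := by
  rw [monicEval, ← compress_one he, ← pencilForm_eq_inner_hEval]
  exact hX n _ e

theorem pencilForm_nonneg_of_mem_span {g m n : ℕ} {A : Fin g → (H →L[ℝ] H)}
    {X : Fin g → (K →L[ℝ] K)} {e : Fin n → K} (he : Orthonormal ℝ e)
    (hpos : ∀ v, 0 ≤ ⟪monicEval A (fun j => compress (X j) e) v, v⟫)
    (h : Fin m → H) {u : Fin m → K} (hu : ∀ i, u i ∈ Submodule.span ℝ (Set.range e)) :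
    0 ≤ pencilForm 1 A X h u := by
  choose c hc using fun i => (Submodule.mem_span_range_iff_exists_fun ℝ).mp (hu i)
  obtain rfl : (fun i => ∑ a, c i a • e a) = u := funext hc
  have hv := hpos (WithLp.toLp 2 fun a => ∑ i, c i a • h i)
  rw [monicEval, ← compress_one he, ← pencilForm_eq_inner_hEval] at hv
  rwa [pencilForm_sum_smul]

end PencilForm

theorem operator_inclusion_iff_matrix_inclusion_general
    {g : ℕ} {H1 H2 𝒦 : Type}
    [NormedAddCommGroup H1] [InnerProductSpace ℝ H1]
    [NormedAddCommGroup H2] [InnerProductSpace ℝ H2]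
    [NormedAddCommGroup 𝒦] [InnerProductSpace ℝ 𝒦]
    (h𝒦 : ¬ FiniteDimensional ℝ 𝒦)
    (A : Fin g → (H1 →L[ℝ] H1)) (B : Fin g → (H2 →L[ℝ] H2))
    (hA : ∀ j, OpIsSymm (A j)) (hB : ∀ j, OpIsSymm (B j)) :
    (∀ (K' : Submodule ℝ 𝒦), IsClosed (K' : Set 𝒦) →
      ∀ X : Fin g → (K' →L[ℝ] K'), (∀ j, OpIsSymm (X j)) →
        operPencilPos (1 : H1 →L[ℝ] H1) A X → operPencilPos (1 : H2 →L[ℝ] H2) B X) ↔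
    (∀ (n : ℕ) (X : Fin g → Matrix (Fin n) (Fin n) ℝ), (∀ j, (X j).IsSymm) →
      OpIsPos (monicEval A X) → OpIsPos (monicEval B X)) := by
  constructor
  · intro hop n M hM hAM
    obtain ⟨K', hK', ⟨b⟩⟩ := exists_isClosed_orthonormalBasis h𝒦 n
    choose X hX hXM using fun j => exists_opIsSymm_compress_eq b (hM j)
    have hAX : operPencilPos 1 A X := fun _ h _ =>
      pencilForm_nonneg_of_mem_span b.orthonormal (by simpa only [hXM] using hAM.2) h
        fun _ => b.toBasis.mem_span _
    refine ⟨hEval_isSymm hB Matrix.isSymm_one hM, fun v => ?_⟩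
    simpa only [hXM] using inner_monicEval_compress_nonneg (hop K' hK' X hX hAX) b.orthonormal v
  · intro hmat K' _ X hX hAX m h u
    obtain ⟨d, e, he, hu⟩ := exists_orthonormal_forall_mem_span u
    have hBX := hmat d _ (fun j => compress_isSymm (hX j) e)
      ⟨hEval_isSymm hA Matrix.isSymm_one fun j => compress_isSymm (hX j) e,
        inner_monicEval_compress_nonneg hAX he⟩
    exact pencilForm_nonneg_of_mem_span he hBX.2 h hu

/-- inclusion of operator free Hilbert spectrahedra over an
infinite-dimensional separable Hilbert space `𝒦` is equivalent to inclusion of the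
free Hilbert spectrahedra at all matrix levels. -/
theorem operator_inclusion_iff_matrix_inclusion
    {g : ℕ} {H1 H2 𝒦 : Type}
    [NormedAddCommGroup H1] [InnerProductSpace ℝ H1] [CompleteSpace H1]
    [TopologicalSpace.SeparableSpace H1]
    [NormedAddCommGroup H2] [InnerProductSpace ℝ H2] [CompleteSpace H2]
    [TopologicalSpace.SeparableSpace H2]
    [NormedAddCommGroup 𝒦] [InnerProductSpace ℝ 𝒦] [CompleteSpace 𝒦]
    [TopologicalSpace.SeparableSpace 𝒦]
    (h𝒦 : ¬ FiniteDimensional ℝ 𝒦)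
    (A : Fin g → (H1 →L[ℝ] H1)) (B : Fin g → (H2 →L[ℝ] H2))
    (hA : ∀ j, OpIsSymm (A j)) (hB : ∀ j, OpIsSymm (B j)) :
    (∀ (K' : Submodule ℝ 𝒦), IsClosed (K' : Set 𝒦) →
      ∀ X : Fin g → (K' →L[ℝ] K'), (∀ j, OpIsSymm (X j)) →
        operPencilPos (1 : H1 →L[ℝ] H1) A X → operPencilPos (1 : H2 →L[ℝ] H2) B X) ↔
    (∀ (n : ℕ) (X : Fin g → Matrix (Fin n) (Fin n) ℝ), (∀ j, (X j).IsSymm) →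
      OpIsPos (monicEval A X) → OpIsPos (monicEval B X)) :=
  operator_inclusion_iff_matrix_inclusion_general h𝒦 A B hA hB
end
end

section
/- Let C_1, C_2 ⊆ ℝ^n be closed convex sets with 0 ∈ int C_1 ∩ int C_2. If the topological boundary of C_1 is contained in the topological boundary of C_2, then C_2 ⊆ C_1. -/
/-- if `C₁, C₂ ⊆ ℝⁿ` are closed convex sets with `0` in the interior of
both and the boundary of `C₁` is contained in the boundary of `C₂`, then `C₂ ⊆ C₁`. -/
theorem subset_of_frontier_subset_frontier
    {n : ℕ} (C1 C2 : Set (EuclideanSpace ℝ (Fin n)))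
    (hC1closed : IsClosed C1) (hC2closed : IsClosed C2)
    (hC1conv : Convex ℝ C1) (hC2conv : Convex ℝ C2)
    (h0 : (0 : EuclideanSpace ℝ (Fin n)) ∈ interior C1 ∩ interior C2)
    (hb : frontier C1 ⊆ frontier C2) :
    C2 ⊆ C1 := by
  intro x hx
  by_contra hxC1
  obtain ⟨h01, h02⟩ := h0
  set S : Set ℝ := {t : ℝ | t ∈ Set.Icc (0:ℝ) 1 ∧ t • x ∈ C1} with hS
  have hcont : Continuous fun t : ℝ => t • x := by continuity
  have h0S : (0:ℝ) ∈ S := by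
    constructor
    · exact ⟨le_refl 0, zero_le_one⟩
    · simpa using interior_subset h01
  have hSne : S.Nonempty := ⟨0, h0S⟩
  have hSbdd : BddAbove S := ⟨1, fun t ht => ht.1.2⟩
  have hSclosed : IsClosed S := by
    have : S = Set.Icc (0:ℝ) 1 ∩ ((fun t : ℝ => t • x) ⁻¹' C1) := rfl
    exact (isClosed_Icc).inter (hC1closed.preimage hcont)
  set t₀ := sSup S with ht₀
  have ht₀S : t₀ ∈ S := hSclosed.csSup_mem hSne hSbdd
  have ht₀0 : 0 ≤ t₀ := ht₀S.1.1
  have ht₀1 : t₀ < 1 := by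
    rcases lt_or_eq_of_le ht₀S.1.2 with h | h
    · exact h
    · exfalso; apply hxC1; have := ht₀S.2; rw [h] at this; simpa using this
  have hyC1 : t₀ • x ∈ C1 := ht₀S.2
  have hynotint : t₀ • x ∉ interior C1 := by
    intro hint
    have hopen : IsOpen ((fun t : ℝ => t • x) ⁻¹' interior C1) :=
      isOpen_interior.preimage hcont
    obtain ⟨ε, hε, hball⟩ := Metric.isOpen_iff.1 hopen t₀ hint
    set t' := min 1 (t₀ + ε / 2) with ht'
    have ht'gt : t₀ < t' := lt_min ht₀1 (by linarith)
    have ht'mem : t' ∈ S := by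
      constructor
      · exact ⟨le_trans ht₀0 ht'gt.le, min_le_left _ _⟩
      · apply interior_subset
        apply hball
        rw [Metric.mem_ball, Real.dist_eq, abs_of_nonneg (by linarith)]
        have : t' ≤ t₀ + ε / 2 := min_le_right _ _
        linarith
    exact absurd (le_csSup hSbdd ht'mem) (not_le.2 ht'gt)
  have hyfr : t₀ • x ∈ frontier C1 := by
    rw [hC1closed.frontier_eq]
    exact ⟨hyC1, hynotint⟩
  have hyint2 : t₀ • x ∈ interior C2 := by
    have := hC2conv.combo_interior_self_mem_interior h02 hx
      (sub_pos.2 ht₀1) ht₀0 (by ring)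
    simpa using this
  exact (hb hyfr).2 hyint2
end

section
/- Let L_1(x) = I_{H_1} + Σ_{j=1}^g A_j x_j and L_2(x) = I_{H_2} + Σ_{j=1}^g B_j x_j be monic linear operator pencils with bounded self-adjoint coefficients on separable real Hilbert spaces H_1, H_2. Then D_{ʰL_1}(n) = D_{ʰL_2}(n) for all n ∈ ℕ if and only if ∂D_{ʰL_1}(n) = ∂D_{ʰL_2}(n) for all n ∈ ℕ, where ∂D_{ʰL}(n) = {X ∈ Sₙ^{g+1} : ʰL(X) ⪰ 0 and ʰL(X) is not positive definite}. -/
open scoped RealInnerProductSpace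

noncomputable section

variable {E H K : Type*}

/-!
Replacing `X₀` by `X₀ + t I` shifts `ʰL(X₀, X)` by `t · Id`. For self-adjoint `T` the set of
`t` with `T + t · Id ⪰ 0` is closed, upward closed and nonempty (it contains `‖T‖`), and
`T + t · Id` lies on the boundary exactly when `t` is its least element. Such a set of reals
is either all of `ℝ` or `[t₀, ∞)` with `t₀` least, so it is determined by its least elements:
equal boundaries give equal spectrahedra. Conversely `T ≻ 0` iff `T - ε · Id ⪰ 0` for some `ε > 0`,
so equal spectrahedra give equal boundaries.
-/

open ContinuousLinearMap

theorem subset_of_forall_isLeast {α : Type*} [ConditionallyCompleteLinearOrder α]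
    [TopologicalSpace α] [OrderTopology α] {s t : Set α} (ht : IsUpperSet t) (htc : IsClosed t)
    (htn : t.Nonempty) (h : ∀ a, IsLeast t a → IsLeast s a) : s ⊆ t := by
  intro x hx
  by_cases hbdd : BddBelow t
  · have hleast := htc.isLeast_csInf htn hbdd
    exact ht ((h _ hleast).2 hx) hleast.1
  · obtain ⟨y, hy, hyx⟩ := not_bddBelow_iff.1 hbdd x
    exact ht hyx.le hy

theorem eq_of_forall_isLeast_iff {α : Type*} [ConditionallyCompleteLinearOrder α]
    [TopologicalSpace α] [OrderTopology α] {s t : Set α} (hs : IsUpperSet s) (hsc : IsClosed s)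
    (hsn : s.Nonempty) (ht : IsUpperSet t) (htc : IsClosed t) (htn : t.Nonempty)
    (h : ∀ a, IsLeast s a ↔ IsLeast t a) : s = t :=
  (subset_of_forall_isLeast ht htc htn fun a => (h a).2).antisymm
    (subset_of_forall_isLeast hs hsc hsn fun a => (h a).1)

section PositiveShifts

variable [NormedAddCommGroup E] [InnerProductSpace ℝ E] {T : E →L[ℝ] E}

def posShifts (T : E →L[ℝ] E) : Set ℝ :=
  {t | OpIsPos (T + t • ContinuousLinearMap.id ℝ E)}

theorem OpIsSymm.add_smul_id (hT : OpIsSymm T) (t : ℝ) :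
    OpIsSymm (T + t • ContinuousLinearMap.id ℝ E) := by
  intro u v
  simp only [add_apply, smul_apply, id_apply, inner_add_left, inner_add_right,
    real_inner_smul_left, real_inner_smul_right, hT u v]

theorem mem_posShifts_iff (hT : OpIsSymm T) (t : ℝ) :
    t ∈ posShifts T ↔ ∀ v, 0 ≤ ⟪T v, v⟫ + t * ‖v‖ ^ 2 := by
  simp only [posShifts, Set.mem_ofPred_eq, OpIsPos, hT.add_smul_id t, true_and, add_apply,
    smul_apply, id_apply, inner_add_left, real_inner_smul_left, real_inner_self_eq_norm_sq]

theorem isUpperSet_posShifts (hT : OpIsSymm T) : IsUpperSet (posShifts T) := by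
  intro s t hst hs
  rw [mem_posShifts_iff hT] at hs ⊢
  intro v
  nlinarith [hs v, sq_nonneg ‖v‖]

theorem isClosed_posShifts (hT : OpIsSymm T) : IsClosed (posShifts T) := by
  have : posShifts T = ⋂ v, {t : ℝ | 0 ≤ ⟪T v, v⟫ + t * ‖v‖ ^ 2} := by
    ext t
    simp only [mem_posShifts_iff hT, Set.mem_iInter, Set.mem_ofPred_eq]
  rw [this]
  exact isClosed_iInter fun v => isClosed_le continuous_const (by fun_prop)

theorem norm_mem_posShifts (hT : OpIsSymm T) : ‖T‖ ∈ posShifts T := by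
  rw [mem_posShifts_iff hT]
  intro v
  have hle : |⟪T v, v⟫| ≤ ‖T‖ * ‖v‖ ^ 2 := calc
    |⟪T v, v⟫| ≤ ‖T v‖ * ‖v‖ := abs_real_inner_le_norm _ _
    _ ≤ ‖T‖ * ‖v‖ * ‖v‖ := by gcongr; exact T.le_opNorm v
    _ = ‖T‖ * ‖v‖ ^ 2 := by ring
  linarith [neg_abs_le ⟪T v, v⟫]

theorem opIsPosDef_add_smul_id_iff (t : ℝ) :
    OpIsPosDef (T + t • ContinuousLinearMap.id ℝ E) ↔
      ∃ ε, 0 < ε ∧ t - ε ∈ posShifts T := by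
  simp only [OpIsPosDef, posShifts, Set.mem_ofPred_eq, sub_smul, add_sub_assoc]

theorem isLeast_posShifts_iff (t : ℝ) :
    IsLeast (posShifts T) t ↔
      OpIsPos (T + t • ContinuousLinearMap.id ℝ E) ∧
        ¬ OpIsPosDef (T + t • ContinuousLinearMap.id ℝ E) := by
  rw [opIsPosDef_add_smul_id_iff]
  refine and_congr_right fun _ => ⟨?_, ?_⟩
  · rintro hmin ⟨ε, hε, hmem⟩
    linarith [hmin hmem]
  · intro hnot s hs
    by_contra! hst
    exact hnot ⟨t - s, by linarith, by rwa [sub_sub_cancel]⟩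

end PositiveShifts

section Homogenization

variable [NormedAddCommGroup H] [InnerProductSpace ℝ H] {g n : ℕ}

theorem hEval_apply (A : Fin g → (H →L[ℝ] H)) (X0 : Matrix (Fin n) (Fin n) ℝ)
    (X : Fin g → Matrix (Fin n) (Fin n) ℝ) (v : PiLp 2 fun _ : Fin n => H) (i : Fin n) :
    hEval A X0 X v i = ∑ k, (X0 i k • v k + ∑ j, X j i k • A j (v k)) := by
  simp [hEval, blockOp]

theorem hEval_add_smul_one (A : Fin g → (H →L[ℝ] H)) (X0 : Matrix (Fin n) (Fin n) ℝ)
    (X : Fin g → Matrix (Fin n) (Fin n) ℝ) (t : ℝ) :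
    hEval A (X0 + t • 1) X = hEval A X0 X + t • ContinuousLinearMap.id ℝ _ := by
  ext v i
  simp only [hEval_apply, add_apply, smul_apply, id_apply, PiLp.add_apply, PiLp.smul_apply,
    Matrix.add_apply, Matrix.smul_apply, Matrix.one_apply, add_smul, Finset.sum_add_distrib]
  simp only [smul_eq_mul, mul_ite, mul_one, mul_zero, ite_smul, zero_smul, Finset.sum_ite_eq,
    Finset.mem_univ, if_true]
  abel

theorem opIsSymm_hEval {A : Fin g → (H →L[ℝ] H)} (hA : ∀ j, OpIsSymm (A j))
    {X0 : Matrix (Fin n) (Fin n) ℝ} {X : Fin g → Matrix (Fin n) (Fin n) ℝ} (hX0 : X0.IsSymm)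
    (hX : ∀ j, (X j).IsSymm) : OpIsSymm (hEval A X0 X) := by
  intro u v
  simp only [PiLp.inner_apply, hEval_apply, sum_inner, inner_sum, inner_add_left,
    inner_add_right, real_inner_smul_left, real_inner_smul_right]
  rw [Finset.sum_comm]
  refine Finset.sum_congr rfl fun i _ => Finset.sum_congr rfl fun k _ => ?_
  simp only [hX0.apply, (hX _).apply, hA _ (u i) (v k)]

end Homogenization

theorem homogeneous_equality_iff_boundary_equality_general
    {g : ℕ} {H1 H2 : Type}
    [NormedAddCommGroup H1] [InnerProductSpace ℝ H1]
    [NormedAddCommGroup H2] [InnerProductSpace ℝ H2]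
    (A : Fin g → (H1 →L[ℝ] H1)) (B : Fin g → (H2 →L[ℝ] H2))
    (hA : ∀ j, OpIsSymm (A j)) (hB : ∀ j, OpIsSymm (B j)) :
    (∀ (n : ℕ) (X0 : Matrix (Fin n) (Fin n) ℝ) (X : Fin g → Matrix (Fin n) (Fin n) ℝ),
        X0.IsSymm → (∀ j, (X j).IsSymm) →
        (OpIsPos (hEval A X0 X) ↔ OpIsPos (hEval B X0 X))) ↔
    (∀ (n : ℕ) (X0 : Matrix (Fin n) (Fin n) ℝ) (X : Fin g → Matrix (Fin n) (Fin n) ℝ),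
        X0.IsSymm → (∀ j, (X j).IsSymm) →
        ((OpIsPos (hEval A X0 X) ∧ ¬ OpIsPosDef (hEval A X0 X)) ↔
          (OpIsPos (hEval B X0 X) ∧ ¬ OpIsPosDef (hEval B X0 X)))) := by
  have hshift : ∀ {n} {X0 : Matrix (Fin n) (Fin n) ℝ}, X0.IsSymm → ∀ t : ℝ,
      (X0 + t • 1).IsSymm := fun hX0 t => hX0.add (Matrix.isSymm_one.smul t)
  constructor
  · intro hD n X0 X hX0 hX
    have heq : posShifts (hEval A X0 X) = posShifts (hEval B X0 X) := Set.ext fun t => by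
      simpa only [posShifts, Set.mem_ofPred_eq, ← hEval_add_smul_one]
        using hD n _ X (hshift hX0 t) hX
    have h0 : IsLeast (posShifts (hEval A X0 X)) 0 ↔ IsLeast (posShifts (hEval B X0 X)) 0 := by
      rw [heq]
    simpa only [isLeast_posShifts_iff, zero_smul, add_zero] using h0
  · intro hbd n X0 X hX0 hX
    have hsA := opIsSymm_hEval hA hX0 hX
    have hsB := opIsSymm_hEval hB hX0 hX
    have heq : posShifts (hEval A X0 X) = posShifts (hEval B X0 X) :=
      eq_of_forall_isLeast_iff (isUpperSet_posShifts hsA) (isClosed_posShifts hsA)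
        ⟨_, norm_mem_posShifts hsA⟩ (isUpperSet_posShifts hsB) (isClosed_posShifts hsB)
        ⟨_, norm_mem_posShifts hsB⟩ fun t => by
          simpa only [isLeast_posShifts_iff, ← hEval_add_smul_one]
            using hbd n _ X (hshift hX0 t) hX
    have h0 : (0 : ℝ) ∈ posShifts (hEval A X0 X) ↔ 0 ∈ posShifts (hEval B X0 X) := by
      rw [heq]
    simpa only [posShifts, Set.mem_ofPred_eq, zero_smul, add_zero] using h0

/-- the homogenized free spectrahedra of two monic pencils coincide at
all levels iff their boundaries (psd but not pd points) coincide at all levels. -/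
theorem homogeneous_equality_iff_boundary_equality
    {g : ℕ} {H1 H2 : Type}
    [NormedAddCommGroup H1] [InnerProductSpace ℝ H1] [CompleteSpace H1]
    [TopologicalSpace.SeparableSpace H1]
    [NormedAddCommGroup H2] [InnerProductSpace ℝ H2] [CompleteSpace H2]
    [TopologicalSpace.SeparableSpace H2]
    (A : Fin g → (H1 →L[ℝ] H1)) (B : Fin g → (H2 →L[ℝ] H2))
    (hA : ∀ j, OpIsSymm (A j)) (hB : ∀ j, OpIsSymm (B j)) :
    (∀ (n : ℕ) (X0 : Matrix (Fin n) (Fin n) ℝ) (X : Fin g → Matrix (Fin n) (Fin n) ℝ),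
        X0.IsSymm → (∀ j, (X j).IsSymm) →
        (OpIsPos (hEval A X0 X) ↔ OpIsPos (hEval B X0 X))) ↔
    (∀ (n : ℕ) (X0 : Matrix (Fin n) (Fin n) ℝ) (X : Fin g → Matrix (Fin n) (Fin n) ℝ),
        X0.IsSymm → (∀ j, (X j).IsSymm) →
        ((OpIsPos (hEval A X0 X) ∧ ¬ OpIsPosDef (hEval A X0 X)) ↔
          (OpIsPos (hEval B X0 X) ∧ ¬ OpIsPosDef (hEval B X0 X)))) :=
  homogeneous_equality_iff_boundary_equality_general A B hA hB
end
end
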